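/- arXiv:2408.02794 — 2 statements merged into one kernel-verified Lean document; each statement's English description precedes it below -/
import Mathlib

section
/- Let N and k both be even positive integers. Then the sum of 2^(p_m + t_m), taken over all divisors m of N such that 2*m^2 divides N*k, equals σ(N), the number of positive divisors of N. -/
/-- `p_m`: the number of odd primes dividing `N*m'/m^2` but not `k/m'`, where `m' = gcd(m,k)`. -/
def pm (N k m : ℕ) : ℕ :=
  ((N * Nat.gcd m k / m ^ 2).primeFactors.filter
    (fun p => p ≠ 2 ∧ ¬ p ∣ k / Nat.gcd m k)).card

/-- `t_m`: equal to `0` if `N*m'/m^2` is odd, or `4 ∣ k/m'`, or both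
`N*m'/m^2 ≡ 2 (mod 4)` and `k/m'` is odd; and equal to `1` otherwise. -/
def tm (N k m : ℕ) : ℕ :=
  if Odd (N * Nat.gcd m k / m ^ 2) ∨ 4 ∣ k / Nat.gcd m k ∨
      ((N * Nat.gcd m k / m ^ 2) % 4 = 2 ∧ Odd (k / Nat.gcd m k)) then 0 else 1

/-!
Fix an odd prime `p` and write `N = p^e N'`, `k = p^c k'`, `m = p^b m'` with `p` coprime to `N'`,
`k'`, `m'`. The condition `2 m² ∣ N k` splits into `2b ≤ e + c` and `2 m'² ∣ N' k`; the quantity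
`t_m` only sees the `2`-adic valuations, and `p` counts towards `p_m` exactly when `c ≤ b` and
`2b < e + c`. So the summand for `m` is a local weight depending on `b` times the summand for `m'`
relative to `N'`. The local weights add up to `e + 1`: the reflection `b ↦ e + c - b` matches the
values of `b` with weight `2` with the `b ≤ e` violating `2b ≤ e + c`. For `N = 2^a` a similar count
gives `a + 1` as soon as `2 ∣ k`. Hence the sum is multiplicative in `N` with the local factors
of `σ`.
-/

open Finset

lemma Nat.gcd_pow_pow (p b c : ℕ) : Nat.gcd (p ^ b) (p ^ c) = p ^ min b c := by
  rcases le_total b c with h | h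
  · rw [min_eq_left h, Nat.gcd_eq_left (pow_dvd_pow p h)]
  · rw [min_eq_right h, Nat.gcd_eq_right (pow_dvd_pow p h)]

lemma Nat.gcd_pow_mul_pow_mul {p b c m k : ℕ} (hp : p.Prime) (hm : ¬ p ∣ m) (hk : ¬ p ∣ k) :
    Nat.gcd (p ^ b * m) (p ^ c * k) = p ^ min b c * Nat.gcd m k := by
  rw [Nat.Coprime.gcd_mul _ (hp.coprime_pow_of_not_dvd hk).symm,
    Nat.Coprime.gcd_mul_right_cancel _ (hp.coprime_pow_of_not_dvd hm), Nat.gcd_pow_pow,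
    Nat.Coprime.gcd_mul_left_cancel _ (hp.coprime_pow_of_not_dvd hk).symm]

lemma Nat.pow_mul_dvd_pow_mul_iff {p i j x y : ℕ} (hp : p.Prime) (hx : ¬ p ∣ x)
    (hy : ¬ p ∣ y) : p ^ i * x ∣ p ^ j * y ↔ i ≤ j ∧ x ∣ y := by
  refine ⟨fun h => ⟨?_, ?_⟩, fun h => mul_dvd_mul (pow_dvd_pow p h.1) h.2⟩
  · exact (Nat.pow_dvd_pow_iff_le_right hp.one_lt).mp
      ((hp.coprime_pow_of_not_dvd hy).symm.dvd_mul_right.mp (dvd_of_mul_right_dvd h))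
  · exact (hp.coprime_pow_of_not_dvd hx).dvd_mul_left.mp (dvd_of_mul_left_dvd h)

lemma Nat.sum_divisors_mul_of_coprime {M : Type*} [AddCommMonoid M] {u v : ℕ}
    (huv : u.Coprime v) (f : ℕ → M) :
    ∑ d ∈ (u * v).divisors, f d = ∑ x ∈ u.divisors, ∑ y ∈ v.divisors, f (x * y) := by
  rw [Nat.divisors_mul, Finset.mul_def, sum_image huv.mul_injOn_divisors, sum_product]

lemma Finset.sum_ite_two_pow_ite {α : Type*} (s : Finset α) (P Q : α → Prop) [DecidablePred P]
    [DecidablePred Q] (hQP : ∀ b, Q b → P b) :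
    ∑ b ∈ s, (if P b then 2 ^ (if Q b then 1 else 0) else 0) =
      #{b ∈ s | P b} + #{b ∈ s | Q b} := by
  rw [card_filter, card_filter, ← sum_add_distrib]
  refine sum_congr rfl fun b _ => ?_
  by_cases hP : P b <;> by_cases hQ : Q b <;> simp_all

lemma sq_dvd_mul_gcd_of_dvd {N k m : ℕ} (hm : m ∣ N) (h : m ^ 2 ∣ N * k) :
    m ^ 2 ∣ N * Nat.gcd m k := by
  rw [← Nat.gcd_mul_left]
  exact Nat.dvd_gcd (by rw [sq]; exact mul_dvd_mul_right hm m) h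

def quotN (N k m : ℕ) : ℕ := N * Nat.gcd m k / m ^ 2

def quotK (k m : ℕ) : ℕ := k / Nat.gcd m k

def oddPrimesNotDvd (A B : ℕ) : ℕ := #{p ∈ A.primeFactors | p ≠ 2 ∧ ¬ p ∣ B}

def twoAdicFlag (A B : ℕ) : ℕ := if Odd A ∨ 4 ∣ B ∨ (A % 4 = 2 ∧ Odd B) then 0 else 1

lemma pm_add_tm_eq (N k m : ℕ) : pm N k m + tm N k m =
    oddPrimesNotDvd (quotN N k m) (quotK k m) + twoAdicFlag (quotN N k m) (quotK k m) := rfl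

section Quotients

variable {p e c b N k m : ℕ}

lemma quotN_mul_sq (h : m ^ 2 ∣ N * Nat.gcd m k) : quotN N k m * m ^ 2 = N * Nat.gcd m k :=
  Nat.div_mul_cancel h

lemma quotN_ne_zero (hN : N ≠ 0) (hm : m ≠ 0) (h : m ^ 2 ∣ N * Nat.gcd m k) :
    quotN N k m ≠ 0 := by
  intro h0
  have := quotN_mul_sq h
  rw [h0, zero_mul] at this
  exact mul_ne_zero hN (Nat.gcd_pos_of_pos_left k (Nat.pos_of_ne_zero hm)).ne' this.symm

lemma not_dvd_quotN (hp : p.Prime) (hpN : ¬ p ∣ N) (hpm : ¬ p ∣ m)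
    (h : m ^ 2 ∣ N * Nat.gcd m k) : ¬ p ∣ quotN N k m := by
  intro hpA
  have hpNg : p ∣ N * Nat.gcd m k := quotN_mul_sq h ▸ hpA.mul_right _
  rcases hp.dvd_mul.mp hpNg with hpN' | hpg
  · exact hpN hpN'
  · exact hpm (hpg.trans (Nat.gcd_dvd_left m k))

lemma quotK_dvd (k m : ℕ) : quotK k m ∣ k := Nat.div_dvd_of_dvd (Nat.gcd_dvd_right m k)

lemma quotN_pow_mul_pow_mul (hp : p.Prime) (hpm : ¬ p ∣ m) (hpk : ¬ p ∣ k)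
    (h : m ^ 2 ∣ N * Nat.gcd m k) (hb : 2 * b ≤ e + min b c) :
    quotN (p ^ e * N) (p ^ c * k) (p ^ b * m) = p ^ (e + min b c - 2 * b) * quotN N k m := by
  have hm : m ≠ 0 := fun h0 => hpm (h0 ▸ dvd_zero p)
  refine Nat.div_eq_of_eq_mul_left
    (pow_pos (Nat.mul_pos (pow_pos hp.pos b) (Nat.pos_of_ne_zero hm)) 2) ?_
  rw [Nat.gcd_pow_mul_pow_mul hp hpm hpk]
  calc p ^ e * N * (p ^ min b c * Nat.gcd m k)
      = p ^ (e + min b c - 2 * b) * p ^ (2 * b) * (N * Nat.gcd m k) := by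
        rw [← pow_add, Nat.sub_add_cancel hb, pow_add]; ring
    _ = _ := by rw [← quotN_mul_sq h]; ring

lemma quotK_pow_mul_pow_mul (hp : p.Prime) (hpm : ¬ p ∣ m) (hpk : ¬ p ∣ k) :
    quotK (p ^ c * k) (p ^ b * m) = p ^ (c - min b c) * quotK k m := by
  have hm : m ≠ 0 := fun h0 => hpm (h0 ▸ dvd_zero p)
  have hg : 0 < Nat.gcd m k := Nat.gcd_pos_of_pos_left k (Nat.pos_of_ne_zero hm)
  unfold quotK
  rw [Nat.gcd_pow_mul_pow_mul hp hpm hpk]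
  refine Nat.div_eq_of_eq_mul_left (Nat.mul_pos (pow_pos hp.pos _) hg) ?_
  calc p ^ c * k = p ^ (c - min b c) * p ^ min b c * (k / Nat.gcd m k * Nat.gcd m k) := by
        rw [← pow_add, Nat.sub_add_cancel (min_le_right b c),
          Nat.div_mul_cancel (Nat.gcd_dvd_right m k)]
    _ = _ := by ring

end Quotients

lemma oddPrimesNotDvd_pow_mul_pow_mul {p α β A B : ℕ} (hp : p.Prime) (hp2 : p ≠ 2) (hA : A ≠ 0)
    (hpA : ¬ p ∣ A) (hpB : ¬ p ∣ B) :
    oddPrimesNotDvd (p ^ α * A) (p ^ β * B) =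
      (if α ≠ 0 ∧ β = 0 then 1 else 0) + oddPrimesNotDvd A B := by
  have hcop : (p ^ α).Coprime A := (hp.coprime_pow_of_not_dvd hpA).symm
  unfold oddPrimesNotDvd
  rw [Nat.primeFactors_mul (pow_ne_zero _ hp.ne_zero) hA, filter_union,
    card_union_of_disjoint (disjoint_filter_filter hcop.disjoint_primeFactors)]
  congr 1
  · rcases eq_or_ne α 0 with rfl | hα
    · simp
    have hpdvd : p ∣ p ^ β * B ↔ β ≠ 0 := by
      rw [hp.dvd_mul, or_iff_left hpB]
      exact ⟨fun h => by rintro rfl; exact hp.one_lt.ne' (Nat.dvd_one.mp h), dvd_pow_self p⟩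
    rw [Nat.primeFactors_prime_pow hα hp, filter_singleton]
    simp only [hpdvd]
    by_cases hβ : β = 0 <;> simp [hβ, hα, hp2]
  · refine congrArg card (filter_congr fun q hq => ?_)
    have hqp : q.Coprime (p ^ β) :=
      (hp.coprime_pow_of_not_dvd hpA).coprime_dvd_left (Nat.dvd_of_mem_primeFactors hq)
    rw [hqp.dvd_mul_left]

lemma oddPrimesNotDvd_two_pow (α B : ℕ) : oddPrimesNotDvd (2 ^ α) B = 0 := by
  refine card_eq_zero.mpr (filter_eq_empty_iff.mpr fun q hq => ?_)
  have hqp := Nat.prime_of_mem_primeFactors hq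
  have hq2 : q = 2 := (Nat.prime_dvd_prime_iff_eq hqp Nat.prime_two).mp
    (hqp.dvd_of_dvd_pow (Nat.dvd_of_mem_primeFactors hq))
  simp [hq2]

lemma twoAdicFlag_pow_mul_pow_mul {p α β A B : ℕ} (hp : Odd p) :
    twoAdicFlag (p ^ α * A) (p ^ β * B) = twoAdicFlag A B := by
  have hcop : ∀ γ, Nat.Coprime 2 (p ^ γ) := fun γ => (Nat.coprime_two_left.mpr hp).pow_right γ
  have h2 : ∀ γ n, 2 ∣ p ^ γ * n ↔ 2 ∣ n := fun γ n => (hcop γ).dvd_mul_left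
  have h4 : ∀ γ n, 4 ∣ p ^ γ * n ↔ 4 ∣ n := fun γ n => ((hcop γ).pow_left 2).dvd_mul_left
  have hmod : ∀ n, n % 4 = 2 ↔ 2 ∣ n ∧ ¬ 4 ∣ n := by omega
  unfold twoAdicFlag
  simp only [Nat.odd_mul, hp.pow, true_and, h4, hmod, h2]

lemma twoAdicFlag_two_pow {α β B : ℕ} (hB : Odd B) :
    twoAdicFlag (2 ^ α) (2 ^ β * B) = if α = 0 ∨ 2 ≤ β ∨ (α = 1 ∧ β = 0) then 0 else 1 := by
  have h4 : 4 ∣ 2 ^ β * B ↔ 2 ≤ β := by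
    simpa using Nat.pow_mul_dvd_pow_mul_iff (i := 2) (j := β) (x := 1) Nat.prime_two
      (by norm_num) hB.not_two_dvd_nat
  have hmod : 2 ^ α % 4 = 2 ↔ α = 1 := by
    rcases α with _ | _ | α
    · simp
    · simp
    · have : 2 ^ (α + 2) = 4 * 2 ^ α := by ring
      omega
  have hodd : ∀ γ, Odd (2 ^ γ) ↔ γ = 0 := by simp [← Nat.not_even_iff_odd, Nat.even_pow]
  unfold twoAdicFlag
  simp only [Nat.odd_mul, hodd, hB, and_true, h4, hmod]

/-- The factor contributed by `b = v_p(m)` for an odd prime `p` with `e = v_p(N)`, `c = v_p(k)`. -/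
def oddPrimeLocalWeight (e c b : ℕ) : ℕ :=
  if 2 * b ≤ e + c then 2 ^ (if c ≤ b ∧ 2 * b < e + c then 1 else 0) else 0

/-- The summand for `N = 2^a`, `k = 2^c k'` with `k'` odd, `m = 2^b`. -/
def twoLocalWeight (a c b : ℕ) : ℕ :=
  if 2 * b + 1 ≤ a + c then 2 ^ (if c - 1 ≤ b ∧ 2 * b + 2 ≤ a + c then 1 else 0) else 0

lemma sum_oddPrimeLocalWeight (e c : ℕ) :
    ∑ b ∈ range (e + 1), oddPrimeLocalWeight e c b = e + 1 := by
  unfold oddPrimeLocalWeight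
  rw [sum_ite_two_pow_ite _ _ _ fun b h => by omega]
  have h1 : {b ∈ range (e + 1) | 2 * b ≤ e + c} = range (min e ((e + c) / 2) + 1) := by
    ext b; simp only [mem_filter, mem_range]; omega
  have h2 : {b ∈ range (e + 1) | c ≤ b ∧ 2 * b < e + c} =
      Ico c (min (e + 1) ((e + c + 1) / 2)) := by
    ext b; simp only [mem_filter, mem_range, mem_Ico]; omega
  rw [h1, h2, card_range, Nat.card_Ico]
  omega

lemma sum_twoLocalWeight {a c : ℕ} (hc : 1 ≤ c) :
    ∑ b ∈ range (a + 1), twoLocalWeight a c b = a + 1 := by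
  unfold twoLocalWeight
  rw [sum_ite_two_pow_ite _ _ _ fun b h => by omega]
  have h1 : {b ∈ range (a + 1) | 2 * b + 1 ≤ a + c} = range (min a ((a + c - 1) / 2) + 1) := by
    ext b; simp only [mem_filter, mem_range]; omega
  have h2 : {b ∈ range (a + 1) | c - 1 ≤ b ∧ 2 * b + 2 ≤ a + c} =
      Ico (c - 1) (min (a + 1) ((a + c) / 2)) := by
    ext b; simp only [mem_filter, mem_range, mem_Ico]; omega
  rw [h1, h2, card_range, Nat.card_Ico]
  omega

def divisorWeight (N k m : ℕ) : ℕ := if 2 * m ^ 2 ∣ N * k then 2 ^ (pm N k m + tm N k m) else 0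

section OddPrime

variable {p e c b N k m : ℕ}

lemma pm_add_tm_pow_mul_pow_mul (hp : p.Prime) (hp2 : p ≠ 2) (hN : N ≠ 0) (hpN : ¬ p ∣ N)
    (hpk : ¬ p ∣ k) (hm : m ∣ N) (hmk : 2 * m ^ 2 ∣ N * k) (hb : b ≤ e) (hbc : 2 * b ≤ e + c) :
    pm (p ^ e * N) (p ^ c * k) (p ^ b * m) + tm (p ^ e * N) (p ^ c * k) (p ^ b * m) =
      (if c ≤ b ∧ 2 * b < e + c then 1 else 0) + (pm N (p ^ c * k) m + tm N (p ^ c * k) m) := by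
  have hpm : ¬ p ∣ m := fun h => hpN (h.trans hm)
  have hsq := sq_dvd_mul_gcd_of_dvd hm (dvd_of_mul_left_dvd hmk)
  have hodd : Odd p := hp.odd_of_ne_two hp2
  have hA0 : quotN N (p ^ c * k) m = p ^ 0 * quotN N k m := by
    simpa using quotN_pow_mul_pow_mul (e := 0) (b := 0) (c := c) hp hpm hpk hsq (by omega)
  have hB0 : quotK (p ^ c * k) m = p ^ c * quotK k m := by
    simpa using quotK_pow_mul_pow_mul (b := 0) (c := c) hp hpm hpk
  have hpB : ¬ p ∣ quotK k m := fun h => hpk (h.trans (quotK_dvd k m))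
  have hA := quotN_ne_zero hN (by rintro rfl; exact hpm (dvd_zero p)) hsq
  have hpA := not_dvd_quotN hp hpN hpm hsq
  rw [pm_add_tm_eq, pm_add_tm_eq, quotN_pow_mul_pow_mul hp hpm hpk hsq (by omega),
    quotK_pow_mul_pow_mul hp hpm hpk, hA0, hB0,
    oddPrimesNotDvd_pow_mul_pow_mul hp hp2 hA hpA hpB,
    oddPrimesNotDvd_pow_mul_pow_mul hp hp2 hA hpA hpB,
    twoAdicFlag_pow_mul_pow_mul hodd, twoAdicFlag_pow_mul_pow_mul hodd]
  have hiff : (e + min b c - 2 * b ≠ 0 ∧ c - min b c = 0) ↔ (c ≤ b ∧ 2 * b < e + c) := by omega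
  simp only [hiff, ne_eq, not_true_eq_false, false_and, if_false, zero_add, add_assoc]

lemma divisorWeight_pow_mul_pow_mul (hp : p.Prime) (hp2 : p ≠ 2) (hN : N ≠ 0) (hpN : ¬ p ∣ N)
    (hpk : ¬ p ∣ k) (hm : m ∣ N) (hb : b ≤ e) :
    divisorWeight (p ^ e * N) (p ^ c * k) (p ^ b * m) =
      oddPrimeLocalWeight e c b * divisorWeight N (p ^ c * k) m := by
  have hpm : ¬ p ∣ m := fun h => hpN (h.trans hm)
  have hp2m : ¬ p ∣ 2 * m ^ 2 := by
    rw [hp.dvd_mul, not_or]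
    exact ⟨fun h => hp2 ((Nat.prime_dvd_prime_iff_eq hp Nat.prime_two).mp h),
      fun h => hpm (hp.dvd_of_dvd_pow h)⟩
  have hpNk : ¬ p ∣ N * k := by rw [hp.dvd_mul, not_or]; exact ⟨hpN, hpk⟩
  have hcond : 2 * (p ^ b * m) ^ 2 ∣ p ^ e * N * (p ^ c * k) ↔
      2 * b ≤ e + c ∧ 2 * m ^ 2 ∣ N * k := by
    rw [show 2 * (p ^ b * m) ^ 2 = p ^ (2 * b) * (2 * m ^ 2) by ring,
      show p ^ e * N * (p ^ c * k) = p ^ (e + c) * (N * k) by ring]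
    exact Nat.pow_mul_dvd_pow_mul_iff hp hp2m hpNk
  have hcond0 : 2 * m ^ 2 ∣ N * (p ^ c * k) ↔ 2 * m ^ 2 ∣ N * k := by
    rw [show N * (p ^ c * k) = p ^ c * (N * k) by ring]
    simpa using Nat.pow_mul_dvd_pow_mul_iff (i := 0) (j := c) hp hp2m hpNk
  unfold divisorWeight oddPrimeLocalWeight
  by_cases hmk : 2 * m ^ 2 ∣ N * k
  · by_cases hbc : 2 * b ≤ e + c
    · rw [if_pos (hcond.mpr ⟨hbc, hmk⟩), if_pos hbc, if_pos (hcond0.mpr hmk),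
        pm_add_tm_pow_mul_pow_mul hp hp2 hN hpN hpk hm hmk hb hbc, pow_add]
    · simp [hcond, hbc]
  · simp [hcond, hcond0, hmk]

lemma sum_divisorWeight_pow_mul (hp : p.Prime) (hp2 : p ≠ 2) (hN : N ≠ 0) (hpN : ¬ p ∣ N)
    (hpk : ¬ p ∣ k) :
    ∑ m ∈ (p ^ e * N).divisors, divisorWeight (p ^ e * N) (p ^ c * k) m =
      (e + 1) * ∑ m ∈ N.divisors, divisorWeight N (p ^ c * k) m := by
  conv_rhs => rw [← sum_oddPrimeLocalWeight e c, sum_mul_sum]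
  rw [Nat.sum_divisors_mul_of_coprime (hp.coprime_pow_of_not_dvd hpN).symm,
    Nat.sum_divisors_prime_pow hp]
  refine sum_congr rfl fun b hb => sum_congr rfl fun m hm => ?_
  exact divisorWeight_pow_mul_pow_mul hp hp2 hN hpN hpk (Nat.dvd_of_mem_divisors hm)
    (Nat.lt_succ_iff.mp (mem_range.mp hb))

end OddPrime

lemma divisorWeight_two_pow {a b c k : ℕ} (hk : Odd k) (hc : 1 ≤ c) (hb : b ≤ a) :
    divisorWeight (2 ^ a) (2 ^ c * k) (2 ^ b) = twoLocalWeight a c b := by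
  have hk2 : ¬ 2 ∣ k := hk.not_two_dvd_nat
  have hcond : 2 * (2 ^ b) ^ 2 ∣ 2 ^ a * (2 ^ c * k) ↔ 2 * b + 1 ≤ a + c := by
    rw [show 2 * (2 ^ b) ^ 2 = 2 ^ (2 * b + 1) * 1 by ring,
      show 2 ^ a * (2 ^ c * k) = 2 ^ (a + c) * k by ring,
      Nat.pow_mul_dvd_pow_mul_iff Nat.prime_two (by norm_num) hk2, and_iff_left (one_dvd k)]
  unfold divisorWeight twoLocalWeight
  by_cases hbc : 2 * b + 1 ≤ a + c
  swap
  · rw [if_neg (mt hcond.mp hbc), if_neg hbc]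
  have hA : quotN (2 ^ a) (2 ^ c * k) (2 ^ b) = 2 ^ (a + min b c - 2 * b) := by
    simpa [quotN] using quotN_pow_mul_pow_mul (N := 1) (m := 1) (e := a) (b := b) (c := c)
      Nat.prime_two (by norm_num) hk2 (by simp) (by omega)
  have hB : quotK (2 ^ c * k) (2 ^ b) = 2 ^ (c - min b c) * k := by
    simpa [quotK] using quotK_pow_mul_pow_mul (m := 1) (b := b) (c := c) Nat.prime_two
      (by norm_num) hk2
  rw [if_pos (hcond.mpr hbc), if_pos hbc, pm_add_tm_eq, hA, hB, oddPrimesNotDvd_two_pow,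
    twoAdicFlag_two_pow hk, zero_add]
  split_ifs <;> omega

lemma sum_divisorWeight_two_pow {a c k : ℕ} (hk : Odd k) (hc : 1 ≤ c) :
    ∑ m ∈ (2 ^ a).divisors, divisorWeight (2 ^ a) (2 ^ c * k) m = a + 1 := by
  conv_rhs => rw [← sum_twoLocalWeight hc]
  rw [Nat.sum_divisors_prime_pow Nat.prime_two]
  exact sum_congr rfl fun b hb =>
    divisorWeight_two_pow hk hc (Nat.lt_succ_iff.mp (mem_range.mp hb))

theorem sum_divisorWeight_eq_card_divisors {k : ℕ} (hk : k ≠ 0) (hk2 : Even k) {N : ℕ}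
    (hN : N ≠ 0) : ∑ m ∈ N.divisors, divisorWeight N k m = #N.divisors := by
  induction N using Nat.strong_induction_on with
  | _ N ih =>
  by_cases hodd : ∃ p, p.Prime ∧ p ≠ 2 ∧ p ∣ N
  · obtain ⟨p, hp, hp2, hpN⟩ := hodd
    obtain ⟨e, N', hpN', rfl⟩ := Nat.exists_eq_pow_mul_and_not_dvd hN p hp.ne_one
    obtain ⟨c, k', hpk', rfl⟩ := Nat.exists_eq_pow_mul_and_not_dvd hk p hp.ne_one
    have hN' : N' ≠ 0 := right_ne_zero_of_mul hN
    have he : e ≠ 0 := by rintro rfl; simp_all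
    have hlt : N' < p ^ e * N' :=
      lt_mul_left (Nat.pos_of_ne_zero hN') (Nat.one_lt_pow he hp.one_lt)
    rw [sum_divisorWeight_pow_mul hp hp2 hN' hpN' hpk', ih N' hlt hN',
      Nat.Coprime.card_divisors_mul (hp.coprime_pow_of_not_dvd hpN').symm,
      Nat.divisors_prime_pow hp, card_map, card_range]
  · obtain ⟨a, rfl⟩ : ∃ a, N = 2 ^ a := ⟨_, Nat.eq_prime_pow_of_unique_prime_dvd hN
      fun hq hqN => by_contra fun hq2 => hodd ⟨_, hq, hq2, hqN⟩⟩
    obtain ⟨c, k', hk', rfl⟩ := Nat.exists_eq_pow_mul_and_not_dvd hk 2 (by norm_num)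
    have hc : c ≠ 0 := by
      rintro rfl
      rw [pow_zero, one_mul, even_iff_two_dvd] at hk2
      exact hk' hk2
    rw [sum_divisorWeight_two_pow (Nat.odd_iff.mpr (Nat.two_dvd_ne_zero.mp hk'))
      (Nat.one_le_iff_ne_zero.mpr hc), Nat.divisors_prime_pow Nat.prime_two, card_map,
      card_range]

theorem sum_over_divisors_even_even_case_general (N k : ℕ) (hN : 0 < N)
    (hk : 0 < k) (hkeven : Even k) :
    ∑ m ∈ N.divisors.filter (fun m => 2 * m ^ 2 ∣ N * k), 2 ^ (pm N k m + tm N k m)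
      = N.divisors.card := by
  rw [sum_filter]
  exact sum_divisorWeight_eq_card_divisors hk.ne' hkeven hN.ne'

theorem sum_over_divisors_even_even_case (N k : ℕ) (hN : 0 < N) (hNeven : Even N)
    (hk : 0 < k) (hkeven : Even k) :
    ∑ m ∈ N.divisors.filter (fun m => 2 * m ^ 2 ∣ N * k), 2 ^ (pm N k m + tm N k m)
      = N.divisors.card :=
  sum_over_divisors_even_even_case_general N k hN hk hkeven
end

section
/- Let N be an odd positive integer, k a positive integer, and m a divisor of N such that m^2 divides N*k. Then the number of divisors d of N satisfying gcd(d, N*k/d) = m is exactly 2^(p_m). -/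
namespace Nat

theorem factorization_gcd_div_self_apply {d n : ℕ} (hd : d ∣ n) (hn : n ≠ 0) (p : ℕ) :
    (gcd d (n / d)).factorization p =
      min (d.factorization p) (n.factorization p - d.factorization p) := by
  have hd0 : d ≠ 0 := ne_zero_of_dvd_ne_zero hn hd
  have hq0 : n / d ≠ 0 := (Nat.div_ne_zero_iff_of_dvd hd).2 ⟨hn, hd0⟩
  rw [factorization_gcd hd0 hq0, Finsupp.inf_apply, factorization_div hd, Finsupp.tsub_apply]

theorem factorization_mul_prod_pow_apply {m : ℕ} (hm : m ≠ 0) {T : Finset ℕ}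
    (hT : ∀ p ∈ T, p.Prime) (e : ℕ → ℕ) (q : ℕ) :
    (m * ∏ p ∈ T, p ^ e p).factorization q = m.factorization q + if q ∈ T then e q else 0 := by
  have hpow : ∀ p ∈ T, p ^ e p ≠ 0 := fun p hp => pow_ne_zero _ (hT p hp).ne_zero
  rw [factorization_mul hm (Finset.prod_ne_zero_iff.2 hpow), factorization_prod hpow,
    Finsupp.add_apply, Finsupp.finsetSum_apply,
    Finset.sum_congr rfl fun p hp => by rw [(hT p hp).factorization_pow, Finsupp.single_apply],
    Finset.sum_ite_eq']

end Nat

def twoChoicePrimes (n N m : ℕ) : Finset ℕ :=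
  n.primeFactors.filter fun p =>
    n.factorization p ≤ N.factorization p + m.factorization p ∧
      2 * m.factorization p < n.factorization p

theorem mem_twoChoicePrimes {n N m p : ℕ} :
    p ∈ twoChoicePrimes n N m ↔ n.factorization p ≤ N.factorization p + m.factorization p ∧
      2 * m.factorization p < n.factorization p := by
  rw [twoChoicePrimes, Finset.mem_filter, ← Nat.support_factorization, Finsupp.mem_support_iff]
  omega

theorem prime_of_mem_twoChoicePrimes {n N m p : ℕ} (hp : p ∈ twoChoicePrimes n N m) :
    p.Prime :=
  Nat.prime_of_mem_primeFactors (Finset.mem_filter.1 hp).1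

def twoChoiceDivisor (n m : ℕ) (T : Finset ℕ) : ℕ :=
  m * ∏ p ∈ T, p ^ (n.factorization p - 2 * m.factorization p)

section

variable {n N m : ℕ}

theorem factorization_bounds_of_dvd (hn : n ≠ 0) (hNn : N ∣ n) (hmN : m ∣ N) (hm2 : m ^ 2 ∣ n)
    (p : ℕ) : m.factorization p ≤ N.factorization p ∧ N.factorization p ≤ n.factorization p ∧
      2 * m.factorization p ≤ n.factorization p := by
  have hN : N ≠ 0 := ne_zero_of_dvd_ne_zero hn hNn
  have hm : m ≠ 0 := ne_zero_of_dvd_ne_zero hN hmN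
  have hm2p := (Nat.factorization_le_iff_dvd (pow_ne_zero 2 hm) hn).2 hm2 p
  rw [Nat.factorization_pow] at hm2p
  exact ⟨(Nat.factorization_le_iff_dvd hm hN).2 hmN p,
    (Nat.factorization_le_iff_dvd hN hn).2 hNn p, hm2p⟩

theorem mem_filter_divisors_gcd_div_eq_iff (hn : n ≠ 0) (hNn : N ∣ n) (hmN : m ∣ N)
    (hm2 : m ^ 2 ∣ n) {d : ℕ} :
    d ∈ N.divisors.filter (fun d => Nat.gcd d (n / d) = m) ↔ d ≠ 0 ∧ ∀ p,
      d.factorization p = m.factorization p ∨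
        p ∈ twoChoicePrimes n N m ∧ d.factorization p = n.factorization p - m.factorization p := by
  have hN : N ≠ 0 := ne_zero_of_dvd_ne_zero hn hNn
  have hm : m ≠ 0 := ne_zero_of_dvd_ne_zero hN hmN
  have bounds := factorization_bounds_of_dvd hn hNn hmN hm2
  simp only [Finset.mem_filter, Nat.mem_divisors, mem_twoChoicePrimes]
  constructor
  · rintro ⟨⟨hdN, -⟩, hgcd⟩
    have hd : d ≠ 0 := ne_zero_of_dvd_ne_zero hN hdN
    refine ⟨hd, fun p => ?_⟩
    have hmin := hgcd ▸ Nat.factorization_gcd_div_self_apply (hdN.trans hNn) hn p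
    have hle := (Nat.factorization_le_iff_dvd hd hN).2 hdN p
    have := bounds p
    omega
  · rintro ⟨hd, hexp⟩
    have hdN : d ∣ N := (Nat.factorization_le_iff_dvd hd hN).1 fun p => by
      have := hexp p; have := bounds p; omega
    refine ⟨⟨hdN, hN⟩, Nat.eq_of_factorization_eq (Nat.gcd_ne_zero_left hd) hm fun p => ?_⟩
    rw [Nat.factorization_gcd_div_self_apply (hdN.trans hNn) hn p]
    have := hexp p; have := bounds p
    omega

theorem factorization_twoChoiceDivisor_apply (hm : m ≠ 0) {T : Finset ℕ}
    (hT : T ⊆ twoChoicePrimes n N m) (q : ℕ) :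
    (twoChoiceDivisor n m T).factorization q = m.factorization q +
      if q ∈ T then n.factorization q - 2 * m.factorization q else 0 :=
  Nat.factorization_mul_prod_pow_apply hm (fun _ hp => prime_of_mem_twoChoicePrimes (hT hp)) _ q

theorem twoChoiceDivisor_ne_zero (hm : m ≠ 0) {T : Finset ℕ} (hT : T ⊆ twoChoicePrimes n N m) :
    twoChoiceDivisor n m T ≠ 0 :=
  mul_ne_zero hm <| Finset.prod_ne_zero_iff.2 fun _ hp =>
    pow_ne_zero _ (prime_of_mem_twoChoicePrimes (hT hp)).ne_zero

theorem filter_divisors_gcd_div_eq (hn : n ≠ 0) (hNn : N ∣ n) (hmN : m ∣ N) (hm2 : m ^ 2 ∣ n) :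
    N.divisors.filter (fun d => Nat.gcd d (n / d) = m) =
      (twoChoicePrimes n N m).powerset.image (twoChoiceDivisor n m) := by
  have hm : m ≠ 0 := ne_zero_of_dvd_ne_zero (ne_zero_of_dvd_ne_zero hn hNn) hmN
  ext d
  rw [mem_filter_divisors_gcd_div_eq_iff hn hNn hmN hm2, Finset.mem_image]
  constructor
  · rintro ⟨hd, hexp⟩
    have hT := Finset.filter_subset (fun p => d.factorization p ≠ m.factorization p)
      (twoChoicePrimes n N m)
    refine ⟨_, Finset.mem_powerset.2 hT,
      Nat.eq_of_factorization_eq (twoChoiceDivisor_ne_zero hm hT) hd fun p => ?_⟩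
    rw [factorization_twoChoiceDivisor_apply hm hT]
    rcases hexp p with h | ⟨hp, h⟩
    · simp [h]
    · have := mem_twoChoicePrimes.1 hp
      simp only [Finset.mem_filter, hp, true_and]
      split_ifs <;> omega
  · rintro ⟨T, hT, rfl⟩
    rw [Finset.mem_powerset] at hT
    refine ⟨twoChoiceDivisor_ne_zero hm hT, fun p => ?_⟩
    rw [factorization_twoChoiceDivisor_apply hm hT]
    split_ifs with hp
    · have := mem_twoChoicePrimes.1 (hT hp)
      exact Or.inr ⟨hT hp, by omega⟩
    · exact Or.inl rfl

theorem injOn_twoChoiceDivisor (hm : m ≠ 0) :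
    Set.InjOn (twoChoiceDivisor n m) (twoChoicePrimes n N m).powerset := by
  intro T₁ hT₁ T₂ hT₂ heq
  rw [Finset.mem_coe, Finset.mem_powerset] at hT₁ hT₂
  ext p
  have h₁ := factorization_twoChoiceDivisor_apply hm hT₁ p
  rw [heq, factorization_twoChoiceDivisor_apply hm hT₂] at h₁
  by_cases hp : p ∈ twoChoicePrimes n N m
  · have := mem_twoChoicePrimes.1 hp
    split_ifs at h₁ <;> first | omega | tauto
  · exact iff_of_false (fun h => hp (hT₁ h)) (fun h => hp (hT₂ h))

theorem card_filter_divisors_gcd_div_eq (hn : n ≠ 0) (hNn : N ∣ n) (hmN : m ∣ N)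
    (hm2 : m ^ 2 ∣ n) :
    (N.divisors.filter fun d => Nat.gcd d (n / d) = m).card =
      2 ^ (twoChoicePrimes n N m).card := by
  have hm : m ≠ 0 := ne_zero_of_dvd_ne_zero (ne_zero_of_dvd_ne_zero hn hNn) hmN
  rw [filter_divisors_gcd_div_eq hn hNn hmN hm2,
    Finset.card_image_of_injOn (injOn_twoChoiceDivisor hm), Finset.card_powerset]

end

theorem sq_dvd_mul_gcd {N k m : ℕ} (hmN : m ∣ N) (hm2 : m ^ 2 ∣ N * k) :
    m ^ 2 ∣ N * Nat.gcd m k := by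
  rw [← Nat.gcd_mul_left]
  exact Nat.dvd_gcd (pow_two m ▸ mul_dvd_mul hmN dvd_rfl) hm2

theorem pm_eq_card_twoChoicePrimes {N k m : ℕ} (hN : Odd N) (hk : k ≠ 0) (hmN : m ∣ N)
    (hm2 : m ^ 2 ∣ N * k) : pm N k m = (twoChoicePrimes (N * k) N m).card := by
  have hN0 : N ≠ 0 := hN.pos.ne'
  have hm : m ≠ 0 := ne_zero_of_dvd_ne_zero hN0 hmN
  have hgcd : Nat.gcd m k ≠ 0 := Nat.gcd_ne_zero_left hm
  have hkgcd : k / Nat.gcd m k ≠ 0 :=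
    (Nat.div_ne_zero_iff_of_dvd (Nat.gcd_dvd_right m k)).2 ⟨hk, hgcd⟩
  have h2 : N.factorization 2 = 0 := Nat.factorization_eq_zero_of_not_dvd hN.not_two_dvd_nat
  unfold pm
  congr 1
  ext p
  rw [Finset.mem_filter, ← Nat.support_factorization, Finsupp.mem_support_iff,
    mem_twoChoicePrimes, Nat.factorization_div (sq_dvd_mul_gcd hmN hm2), Finsupp.tsub_apply,
    Nat.factorization_mul hN0 hgcd, Nat.factorization_mul hN0 hk, Nat.factorization_pow,
    Nat.factorization_gcd hm hk]
  by_cases hp : p.Prime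
  · rw [hp.dvd_iff_one_le_factorization hkgcd, Nat.factorization_div (Nat.gcd_dvd_right m k),
      Finsupp.tsub_apply, Nat.factorization_gcd hm hk]
    simp only [Finsupp.add_apply, Finsupp.smul_apply, Finsupp.inf_apply, smul_eq_mul]
    rcases eq_or_ne p 2 with rfl | _ <;> omega
  · simp [Nat.factorization_eq_zero_of_not_prime _ hp]

theorem card_divisors_with_gcd_eq_odd_case_general (N k m : ℕ) (hNodd : Odd N)
    (hk : 0 < k) (hm : m ∣ N) (hm2 : m ^ 2 ∣ N * k) :
    (N.divisors.filter (fun d => Nat.gcd d (N * k / d) = m)).card = 2 ^ pm N k m := by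
  rw [pm_eq_card_twoChoicePrimes hNodd hk.ne' hm hm2]
  exact card_filter_divisors_gcd_div_eq (mul_ne_zero hNodd.pos.ne' hk.ne') (dvd_mul_right N k)
    hm hm2

theorem card_divisors_with_gcd_eq_odd_case (N k m : ℕ) (hN : 0 < N) (hNodd : Odd N)
    (hk : 0 < k) (hm : m ∣ N) (hm2 : m ^ 2 ∣ N * k) :
    (N.divisors.filter (fun d => Nat.gcd d (N * k / d) = m)).card = 2 ^ pm N k m :=
  card_divisors_with_gcd_eq_odd_case_general N k m hNodd hk hm hm2
end
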